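/- arXiv:2510.26317 — 3 statements merged into one kernel-verified Lean document; each statement's English description precedes it below -/
import Mathlib

section
/- There exists a constant C depending only on k such that the following holds. Let A be a k×k real symmetric matrix with ‖A − Id‖ ≤ ε for some ε ∈ (0, 1/2], and let T be a lower-triangular k×k real matrix with positive diagonal entries satisfying T·A·Tᵗ = Id. Then ‖T − Id‖ ≤ C·ε. -/
open Matrix

/-- The operator norm of a `k × k` real matrix, viewed as a linear map on
Euclidean space `ℝᵏ`. -/
noncomputable def matOpNorm {k : ℕ} (A : Matrix (Fin k) (Fin k) ℝ) : ℝ :=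
  ‖LinearMap.toContinuousLinearMap (Matrix.toEuclideanLin A)‖

section Aux
open scoped Matrix.Norms.L2Operator

variable {k : ℕ}

lemma matOpNorm_eq_norm (A : Matrix (Fin k) (Fin k) ℝ) : matOpNorm A = ‖A‖ := rfl

lemma matOpNorm_nonneg (A : Matrix (Fin k) (Fin k) ℝ) : 0 ≤ matOpNorm A :=
  norm_nonneg _

lemma matOpNorm_mul_le (A B : Matrix (Fin k) (Fin k) ℝ) :
    matOpNorm (A * B) ≤ matOpNorm A * matOpNorm B :=
  Matrix.l2_opNorm_mul A B

lemma matOpNorm_add_le (A B : Matrix (Fin k) (Fin k) ℝ) :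
    matOpNorm (A + B) ≤ matOpNorm A + matOpNorm B :=
  norm_add_le A B

lemma matOpNorm_neg (A : Matrix (Fin k) (Fin k) ℝ) : matOpNorm (-A) = matOpNorm A :=
  norm_neg A

lemma matOpNorm_one_le : matOpNorm (1 : Matrix (Fin k) (Fin k) ℝ) ≤ 1 := by
  have h1 : matOpNorm (1 : Matrix (Fin k) (Fin k) ℝ)
      = ‖Matrix.toEuclideanCLM (𝕜 := ℝ) (n := Fin k) 1‖ := rfl
  rw [h1, _root_.map_one]
  exact ContinuousLinearMap.norm_id_le

lemma matOpNorm_transpose_mul_self (A : Matrix (Fin k) (Fin k) ℝ) :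
    matOpNorm (Aᵀ * A) = matOpNorm A * matOpNorm A := by
  have hc : Aᵀ = Aᴴ := by ext i j; simp [Matrix.conjTranspose_apply]
  rw [matOpNorm_eq_norm, matOpNorm_eq_norm, hc]
  exact Matrix.l2_opNorm_conjTranspose_mul_self A

lemma matOpNorm_transpose (A : Matrix (Fin k) (Fin k) ℝ) :
    matOpNorm Aᵀ = matOpNorm A := by
  have hc : Aᵀ = Aᴴ := by ext i j; simp [Matrix.conjTranspose_apply]
  rw [matOpNorm_eq_norm, matOpNorm_eq_norm, hc]
  exact Matrix.l2_opNorm_conjTranspose A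

lemma euclidean_coord_le (v : EuclideanSpace ℝ (Fin k)) (i : Fin k) : |v i| ≤ ‖v‖ := by
  have h := abs_real_inner_le_norm (EuclideanSpace.single i (1:ℝ)) v
  simp only [EuclideanSpace.norm_single, norm_one, one_mul] at h
  have h2 : (inner ℝ (EuclideanSpace.single i (1:ℝ)) v : ℝ) = v i := by
    rw [real_inner_comm]
    simp [EuclideanSpace.inner_single_right]
  rwa [h2] at h

lemma matOpNorm_entry_le (A : Matrix (Fin k) (Fin k) ℝ) (i j : Fin k) :
    |A i j| ≤ matOpNorm A := by
  have hx : ‖(EuclideanSpace.single j (1:ℝ) : EuclideanSpace ℝ (Fin k))‖ = 1 := by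
    simp
  have h := Matrix.l2_opNorm_mulVec A (EuclideanSpace.single j (1:ℝ))
  rw [hx, mul_one] at h
  refine le_trans ?_ h
  have h2 := euclidean_coord_le ((EuclideanSpace.equiv (Fin k) ℝ).symm <|
    A *ᵥ (EuclideanSpace.single j (1:ℝ))) i
  refine le_trans (le_of_eq ?_) h2
  congr 1
  show A i j = (A *ᵥ (WithLp.equiv 2 (Fin k → ℝ)) (EuclideanSpace.single j (1:ℝ))) i
  have : (WithLp.equiv 2 (Fin k → ℝ)) (EuclideanSpace.single j (1:ℝ)) = Pi.single j (1:ℝ) := rfl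
  rw [this, Matrix.mulVec_single]
  simp

lemma matOpNorm_stdBasisMatrix_le (i j : Fin k) (c : ℝ) :
    matOpNorm (Matrix.single i j c) ≤ |c| := by
  unfold matOpNorm
  refine ContinuousLinearMap.opNorm_le_bound _ (abs_nonneg c) (fun x => ?_)
  have hx : (LinearMap.toContinuousLinearMap
      (Matrix.toEuclideanLin (Matrix.single i j c))) x
      = (WithLp.equiv 2 (Fin k → ℝ)).symm
        ((Matrix.single i j c) *ᵥ (WithLp.equiv 2 (Fin k → ℝ)) x) := rfl
  rw [hx, Matrix.single_mulVec]
  have : Function.update (0 : Fin k → ℝ) i (c * (WithLp.equiv 2 (Fin k → ℝ)) x j)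
      = Pi.single i (c * (WithLp.equiv 2 (Fin k → ℝ)) x j) := rfl
  rw [this]
  have h2 : ((WithLp.equiv 2 (Fin k → ℝ)).symm
      (Pi.single i (c * (WithLp.equiv 2 (Fin k → ℝ)) x j)) : EuclideanSpace ℝ (Fin k))
      = EuclideanSpace.single i (c * (WithLp.equiv 2 (Fin k → ℝ)) x j) := rfl
  rw [h2, EuclideanSpace.norm_single]
  rw [Real.norm_eq_abs, abs_mul]
  gcongr
  exact euclidean_coord_le x j

lemma matOpNorm_le_sum_entries (A : Matrix (Fin k) (Fin k) ℝ) :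
    matOpNorm A ≤ ∑ i : Fin k, ∑ j : Fin k, |A i j| := by
  conv_lhs => rw [Matrix.matrix_eq_sum_single A]
  rw [matOpNorm_eq_norm]
  refine le_trans (norm_sum_le _ _) ?_
  refine Finset.sum_le_sum (fun i _ => ?_)
  refine le_trans (norm_sum_le _ _) ?_
  exact Finset.sum_le_sum (fun j _ => matOpNorm_stdBasisMatrix_le i j (A i j))

end Aux

set_option maxHeartbeats 2000000 in
/-- There is a constant `C = C(k) > 0` such that: if `A` is a symmetric `k × k` real
matrix with `‖A - Id‖ ≤ ε` for some `ε ∈ (0, 1/2]`, and `T` is lower triangular with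
positive diagonal entries and `T A Tᵗ = Id`, then `‖T - Id‖ ≤ C ε`. -/
theorem stmt_2 (k : ℕ) :
    ∃ C : ℝ, 0 < C ∧ ∀ ε : ℝ, 0 < ε → ε ≤ 1 / 2 →
      ∀ A T : Matrix (Fin k) (Fin k) ℝ, A.IsSymm →
        matOpNorm (A - 1) ≤ ε →
        (∀ i j : Fin k, i < j → T i j = 0) →
        (∀ i : Fin k, 0 < T i i) →
        T * A * Tᵀ = 1 →
        matOpNorm (T - 1) ≤ C * ε := by
  classical
  set K : ℝ := 4 + 4 * (k : ℝ) with hKdef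
  have hk0 : (0:ℝ) ≤ (k:ℝ) := Nat.cast_nonneg k
  have hK1 : (1:ℝ) ≤ K := by simp only [hKdef]; linarith
  refine ⟨(k:ℝ)^2 * K^k + 1, by positivity, ?_⟩
  intro ε hε hε2 A T hA hAnorm hTlow hTdiag hTAT
  -- invertibility of T
  have hTT_bt : (Tᵀ).BlockTriangular id := fun i j h => hTlow j i h
  have hdetT : 0 < T.det := by
    rw [← Matrix.det_transpose, Matrix.det_of_upperTriangular hTT_bt]
    exact Finset.prod_pos (fun i _ => hTdiag i)
  have hdet_unit : IsUnit T.det := isUnit_iff_ne_zero.mpr hdetT.ne'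
  have hdetTT : IsUnit (Tᵀ).det := by rw [Matrix.det_transpose]; exact hdet_unit
  have hTA : T * A = (Tᵀ)⁻¹ := (Matrix.inv_eq_left_inv hTAT).symm
  have hBA : Tᵀ * T * A = 1 := by rw [mul_assoc, hTA, Matrix.mul_nonsing_inv _ hdetTT]
  have hAeq : A = T⁻¹ * (Tᵀ)⁻¹ := by
    rw [← hTA, ← mul_assoc, Matrix.nonsing_inv_mul _ hdet_unit, one_mul]
  -- norm bounds
  have hAle : matOpNorm A ≤ 1 + ε := by
    calc matOpNorm A = matOpNorm ((A - 1) + 1) := by congr 1; abel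
    _ ≤ matOpNorm (A - 1) + matOpNorm 1 := matOpNorm_add_le _ _
    _ ≤ ε + 1 := add_le_add hAnorm matOpNorm_one_le
    _ = 1 + ε := by ring
  have hB1 : matOpNorm (Tᵀ * T - 1) ≤ 2 * ε := by
    have he : Tᵀ * T - 1 = (Tᵀ * T) * (1 - A) := by rw [mul_sub, mul_one, hBA]
    have h1A : matOpNorm (1 - A) ≤ ε := by
      rw [show (1 : Matrix (Fin k) (Fin k) ℝ) - A = -(A - 1) from (neg_sub _ _).symm, matOpNorm_neg]
      exact hAnorm
    have h2 : matOpNorm (Tᵀ * T) ≤ matOpNorm (Tᵀ * T - 1) + 1 := by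
      calc matOpNorm (Tᵀ * T) = matOpNorm ((Tᵀ * T - 1) + 1) := by congr 1; abel
      _ ≤ matOpNorm (Tᵀ * T - 1) + matOpNorm 1 := matOpNorm_add_le _ _
      _ ≤ matOpNorm (Tᵀ * T - 1) + 1 := by linarith [matOpNorm_one_le (k := k)]
    have h1 : matOpNorm (Tᵀ * T - 1) ≤ (matOpNorm (Tᵀ * T - 1) + 1) * ε := by
      calc matOpNorm (Tᵀ * T - 1) = matOpNorm ((Tᵀ * T) * (1 - A)) := by rw [← he]
      _ ≤ matOpNorm (Tᵀ * T) * matOpNorm (1 - A) := matOpNorm_mul_le _ _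
      _ ≤ (matOpNorm (Tᵀ * T - 1) + 1) * ε := by
          apply mul_le_mul h2 h1A (matOpNorm_nonneg _)
          linarith [matOpNorm_nonneg (Tᵀ * T - 1)]
    nlinarith [matOpNorm_nonneg (Tᵀ * T - 1)]
  have hBle : matOpNorm (Tᵀ * T) ≤ 2 := by
    calc matOpNorm (Tᵀ * T) = matOpNorm ((Tᵀ * T - 1) + 1) := by congr 1; abel
    _ ≤ matOpNorm (Tᵀ * T - 1) + matOpNorm 1 := matOpNorm_add_le _ _
    _ ≤ 2 * ε + 1 := by linarith [matOpNorm_one_le (k := k)]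
    _ ≤ 2 := by linarith
  have hTle : matOpNorm T ≤ 2 := by
    have h := matOpNorm_transpose_mul_self T
    nlinarith [matOpNorm_nonneg T]
  have hTinvle : matOpNorm T⁻¹ ≤ 3 / 2 := by
    have h := matOpNorm_transpose_mul_self ((Tᵀ)⁻¹)
    have ht : ((Tᵀ)⁻¹)ᵀ = T⁻¹ := by
      rw [← Matrix.transpose_nonsing_inv, Matrix.transpose_transpose]
    rw [ht, ← hAeq] at h
    have h2 : matOpNorm ((Tᵀ)⁻¹) = matOpNorm T⁻¹ := by
      rw [← Matrix.transpose_nonsing_inv, matOpNorm_transpose]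
    rw [h2] at h
    nlinarith [matOpNorm_nonneg T⁻¹, hAle]
  have hTinv_low : ∀ a b : Fin k, a < b → T⁻¹ a b = 0 := by
    haveI : Invertible Tᵀ := (Tᵀ).invertibleOfIsUnitDet hdetTT
    have hinv_bt : ((Tᵀ)⁻¹).BlockTriangular id :=
      Matrix.blockTriangular_inv_of_blockTriangular hTT_bt
    intro a b hab
    have h := hinv_bt (i := b) (j := a) hab
    rwa [← Matrix.transpose_nonsing_inv, Matrix.transpose_apply] at h
  have hTdiag_lb : ∀ i : Fin k, (2:ℝ)/3 ≤ T i i := by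
    intro i
    have h11 : T⁻¹ i i * T i i = 1 := by
      have hmm := congrFun (congrFun (Matrix.nonsing_inv_mul T hdet_unit) i) i
      rw [Matrix.mul_apply, Matrix.one_apply_eq] at hmm
      have hs : ∑ l : Fin k, T⁻¹ i l * T l i = T⁻¹ i i * T i i := by
        refine Finset.sum_eq_single i (fun l _ hl => ?_) (fun h => absurd (Finset.mem_univ i) h)
        rcases lt_or_gt_of_ne hl with h | h
        · rw [hTlow l i h, mul_zero]
        · rw [hTinv_low i l h, zero_mul]
      rw [hs] at hmm
      exact hmm
    have habs : T⁻¹ i i ≤ 3/2 :=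
      le_trans (le_abs_self _) (le_trans (matOpNorm_entry_le _ i i) hTinvle)
    nlinarith [hTdiag i]
  have hTentry : ∀ a b : Fin k, |T a b| ≤ 2 :=
    fun a b => le_trans (matOpNorm_entry_le T a b) hTle
  have hBentry : ∀ a b : Fin k, |(Tᵀ * T) a b - (1 : Matrix (Fin k) (Fin k) ℝ) a b| ≤ 2 * ε := by
    intro a b
    have h := matOpNorm_entry_le (Tᵀ * T - 1) a b
    rw [Matrix.sub_apply] at h
    exact le_trans h hB1
  -- main induction on rows from the bottom
  have key : ∀ n : ℕ, ∀ i : Fin k, k - n ≤ (i : ℕ) → ∀ a : Fin k,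
      |T i a - (1 : Matrix (Fin k) (Fin k) ℝ) i a| ≤ K ^ (k - (i : ℕ)) * ε := by
    intro n
    induction n with
    | zero => exact fun i hi a => absurd hi (by omega)
    | succ n ih =>
      intro i hi a
      have hik : (i : ℕ) < k := i.isLt
      have hKpow1 : (1:ℝ) ≤ K ^ (k - (i : ℕ) - 1) := one_le_pow₀ hK1
      have hy0 : (0:ℝ) ≤ K ^ (k - (i : ℕ) - 1) * ε := by positivity
      have hyε : ε ≤ K ^ (k - (i : ℕ) - 1) * ε := by nlinarith
      have hpow : K ^ (k - (i : ℕ)) = K ^ (k - (i : ℕ) - 1) * K := by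
        rw [← pow_succ]
        congr 1
        omega
      -- bound on the sum over rows below i
      have hrest : ∀ a' : Fin k, (a' : ℕ) ≤ (i : ℕ) →
          |∑ l ∈ Finset.univ.erase i, T l a' * T l i|
            ≤ (k : ℝ) * (2 * (K ^ (k - (i : ℕ) - 1) * ε)) := by
        intro a' ha'
        refine le_trans (Finset.abs_sum_le_sum_abs _ _) ?_
        have hterm : ∀ l ∈ Finset.univ.erase i,
            |T l a' * T l i| ≤ 2 * (K ^ (k - (i : ℕ) - 1) * ε) := by
          intro l hl
          have hl' : l ≠ i := Finset.ne_of_mem_erase hl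
          rcases lt_or_gt_of_ne hl' with h | h
          · rw [hTlow l i h, mul_zero, abs_zero]; positivity
          · have hil : (i : ℕ) < (l : ℕ)  := h
            have h1a : (1 : Matrix (Fin k) (Fin k) ℝ) l a' = 0 := by
              rw [Matrix.one_apply_ne]
              exact fun hc => by rw [hc] at hil; omega
            have h1 : |T l a'| ≤ K ^ (k - (l : ℕ)) * ε := by
              have := ih l (by omega) a'
              rwa [h1a, sub_zero] at this
            have h1' : |T l a'| ≤ K ^ (k - (i : ℕ) - 1) * ε := by
              refine le_trans h1 ?_
              have : K ^ (k - (l : ℕ)) ≤ K ^ (k - (i : ℕ) - 1) :=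
                pow_le_pow_right₀ hK1 (by omega)
              nlinarith
            rw [abs_mul]
            calc |T l a'| * |T l i| ≤ (K ^ (k - (i : ℕ) - 1) * ε) * 2 :=
                  mul_le_mul h1' (hTentry l i) (abs_nonneg _) (by positivity)
              _ = 2 * (K ^ (k - (i : ℕ) - 1) * ε) := by ring
        refine le_trans (Finset.sum_le_sum hterm) ?_
        rw [Finset.sum_const, nsmul_eq_mul]
        have hcard : ((Finset.univ.erase i).card : ℝ) ≤ (k : ℝ) := by
          have := Finset.card_erase_le (s := (Finset.univ : Finset (Fin k))) (a := i)
          have h2 : (Finset.univ : Finset (Fin k)).card = k := by simp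
          exact_mod_cast le_trans this (le_of_eq h2)
        have : (0:ℝ) ≤ 2 * (K ^ (k - (i : ℕ) - 1) * ε) := by positivity
        nlinarith
      -- the (a, i) entry of B = Tᵀ T
      have hsum : ∀ a' : Fin k, (Tᵀ * T) a' i
          = T i a' * T i i + ∑ l ∈ Finset.univ.erase i, T l a' * T l i := by
        intro a'
        rw [Matrix.mul_apply]
        rw [show (∑ l, Tᵀ a' l * T l i) = ∑ l, T l a' * T l i from by
          refine Finset.sum_congr rfl (fun l _ => ?_); rw [Matrix.transpose_apply]]
        exact (Finset.add_sum_erase _ _ (Finset.mem_univ i)).symm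
      rcases lt_trichotomy (a : ℕ) (i : ℕ) with hai | hai | hai
      · -- below-diagonal entry
        have hne : a ≠ i := fun hc => by rw [hc] at hai; omega
        have h1ai : (1 : Matrix (Fin k) (Fin k) ℝ) a i = 0 := Matrix.one_apply_ne hne
        have hBai : |(Tᵀ * T) a i| ≤ 2 * ε := by
          have := hBentry a i
          rwa [h1ai, sub_zero] at this
        have hmain : |T i a * T i i| ≤ 2 * ε + (k : ℝ) * (2 * (K ^ (k - (i : ℕ) - 1) * ε)) := by
          have heq : T i a * T i i = (Tᵀ * T) a i - ∑ l ∈ Finset.univ.erase i, T l a * T l i := by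
            rw [hsum a]; ring
          rw [heq]
          refine le_trans (abs_sub _ _) ?_
          exact add_le_add hBai (hrest a (le_of_lt hai))
        have h1ia : (1 : Matrix (Fin k) (Fin k) ℝ) i a = 0 :=
          Matrix.one_apply_ne (fun hc => by rw [hc] at hai; omega)
        rw [h1ia, sub_zero]
        have hpos : |T i a| * (2/3 : ℝ) ≤ |T i a| * T i i :=
          mul_le_mul_of_nonneg_left (hTdiag_lb i) (abs_nonneg _)
        have habs2 : |T i a| * T i i = |T i a * T i i| := by
          rw [abs_mul, abs_of_pos (hTdiag i)]
        have hx : |T i a| ≤ (3/2) * (2 * ε + (k : ℝ) * (2 * (K ^ (k - (i : ℕ) - 1) * ε))) := by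
          rw [habs2] at hpos
          nlinarith [abs_nonneg (T i a)]
        rw [hpow]
        have hky : (0:ℝ) ≤ (k : ℝ) * (K ^ (k - (i : ℕ) - 1) * ε) :=
          mul_nonneg hk0 hy0
        calc |T i a| ≤ (3/2) * (2 * ε + (k : ℝ) * (2 * (K ^ (k - (i : ℕ) - 1) * ε))) := hx
          _ = 3 * ε + 3 * ((k:ℝ) * (K ^ (k - (i : ℕ) - 1) * ε)) := by ring
          _ ≤ 4 * (K ^ (k - (i : ℕ) - 1) * ε) + 4 * ((k:ℝ) * (K ^ (k - (i : ℕ) - 1) * ε)) := by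
              linarith
          _ = K ^ (k - (i : ℕ) - 1) * K * ε := by rw [hKdef]; ring
      · -- diagonal entry
        have haeq : a = i := Fin.ext hai
        subst haeq
        have hBaa : |(Tᵀ * T) a a - 1| ≤ 2 * ε := by
          have := hBentry a a
          rwa [Matrix.one_apply_eq] at this
        have hmain : |T a a * T a a - 1| ≤ 2 * ε + (k : ℝ) * (2 * (K ^ (k - (a : ℕ) - 1) * ε)) := by
          have heq : T a a * T a a - 1
              = ((Tᵀ * T) a a - 1) - ∑ l ∈ Finset.univ.erase a, T l a * T l a := by
            rw [hsum a]; ring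
          rw [heq]
          refine le_trans (abs_sub _ _) ?_
          exact add_le_add hBaa (hrest a le_rfl)
        have h7 : |T a a - 1| ≤ |T a a * T a a - 1| := by
          have hpos : (1:ℝ) ≤ T a a + 1 := by linarith [hTdiag_lb a]
          calc |T a a - 1| = |T a a - 1| * 1 := (mul_one _).symm
            _ ≤ |T a a - 1| * |T a a + 1| := by
                refine mul_le_mul_of_nonneg_left ?_ (abs_nonneg _)
                rw [abs_of_pos (by linarith : (0:ℝ) < T a a + 1)]
                exact hpos
            _ = |(T a a - 1) * (T a a + 1)| := (abs_mul _ _).symm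
            _ = |T a a * T a a - 1| := congrArg abs (by ring)
        rw [Matrix.one_apply_eq]
        rw [hpow]
        have hky : (0:ℝ) ≤ (k : ℝ) * (K ^ (k - (a : ℕ) - 1) * ε) :=
          mul_nonneg hk0 hy0
        calc |T a a - 1| ≤ 2 * ε + (k : ℝ) * (2 * (K ^ (k - (a : ℕ) - 1) * ε)) :=
              le_trans h7 hmain
          _ = 2 * ε + 2 * ((k:ℝ) * (K ^ (k - (a : ℕ) - 1) * ε)) := by ring
          _ ≤ 4 * (K ^ (k - (a : ℕ) - 1) * ε) + 4 * ((k:ℝ) * (K ^ (k - (a : ℕ) - 1) * ε)) := by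
              linarith
          _ = K ^ (k - (a : ℕ) - 1) * K * ε := by rw [hKdef]; ring
      · -- above-diagonal entry
        have hne : i ≠ a := fun hc => by rw [hc] at hai; omega
        rw [hTlow i a hai, Matrix.one_apply_ne hne, sub_zero, abs_zero]
        positivity
  -- conclusion
  have hfinal : ∀ i a : Fin k, |(T - 1) i a| ≤ K ^ k * ε := by
    intro i a
    have h := key k i (by omega) a
    rw [Matrix.sub_apply]
    refine le_trans h ?_
    have : K ^ (k - (i:ℕ)) ≤ K ^ k := pow_le_pow_right₀ hK1 (by omega)
    nlinarith
  calc matOpNorm (T - 1) ≤ ∑ i : Fin k, ∑ a : Fin k, |(T - 1) i a| :=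
        matOpNorm_le_sum_entries _
    _ ≤ ∑ _i : Fin k, ∑ _a : Fin k, K ^ k * ε := by
        refine Finset.sum_le_sum (fun i _ => Finset.sum_le_sum (fun a _ => hfinal i a))
    _ = (k:ℝ)^2 * K^k * ε := by
        rw [Finset.sum_const, Finset.sum_const, nsmul_eq_mul, nsmul_eq_mul]
        simp [Finset.card_univ]
        ring
    _ ≤ ((k:ℝ)^2 * K^k + 1) * ε := by nlinarith [pow_nonneg (le_trans zero_le_one hK1) k]
end

section
/- Let θ ∈ (1/3, 1), C ≥ 1, and α ∈ (0,1) with α·(1+θ) > 1, and let ε > 0. Then there exists δ > 0, depending only on θ, C, α, ε, such that the following holds: whenever (a_j)_{j=0}^{N} is a nondecreasing finite sequence of real numbers with a_N − a_0 ≤ δ, and there exists Θ ∈ ℝ with |a_j − Θ|^{1+θ} ≤ C·(a_{j+1} − a_{j−1}) for all 1 ≤ j ≤ N−1, then Σ_{j=1}^{N} (a_j − a_{j−1})^{α} ≤ ε. -/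
set_option maxHeartbeats 1000000
open Finset

private lemma mono_le' {u : ℕ → ℝ} {n : ℕ} (h : ∀ j, j < n → u j ≤ u (j+1)) :
    ∀ i j, i ≤ j → j ≤ n → u i ≤ u j := by
  intro i j hij hjn
  induction hij with
  | refl => exact le_rfl
  | @step m hm ih =>
      exact (ih (Nat.le_of_succ_le hjn)).trans (h m (Nat.lt_of_succ_le hjn))

private lemma tele' {u : ℕ → ℝ} {l : ℕ} (hl : 1 ≤ l) :
    ∀ r, l ≤ r → ∑ j ∈ Icc l r, (u j - u (j-1)) = u r - u (l-1) := by
  intro r hr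
  induction r, hr using Nat.le_induction with
  | base => rw [Finset.Icc_self, Finset.sum_singleton]
  | succ m hm ih =>
      rw [Finset.sum_Icc_succ_top (by omega), ih]
      have h1 : m + 1 - 1 = m := by omega
      rw [h1]; ring

private lemma jensen' {α : ℝ} (hα0 : 0 < α) (hα1 : α ≤ 1) (s : Finset ℕ) (b : ℕ → ℝ)
    (hb : ∀ j ∈ s, 0 ≤ b j) (hs : s.Nonempty) :
    ∑ j ∈ s, b j ^ α ≤ (s.card : ℝ) ^ (1 - α) * (∑ j ∈ s, b j) ^ α := by
  have hn : (0:ℝ) < s.card := by exact_mod_cast Finset.card_pos.2 hs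
  have hp : (1:ℝ) ≤ 1/α := by rw [le_div_iff₀ hα0]; linarith
  have hsum : (0:ℝ) ≤ ∑ j ∈ s, b j := Finset.sum_nonneg hb
  have key := Real.arith_mean_le_rpow_mean s (fun _ => (s.card:ℝ)⁻¹) (fun j => b j ^ α)
    (fun i _ => by positivity)
    (by rw [Finset.sum_const, nsmul_eq_mul]; field_simp)
    (fun i hi => Real.rpow_nonneg (hb i hi) α) hp
  have hre : ∀ j ∈ s, (s.card:ℝ)⁻¹ * (b j ^ α) ^ (1/α : ℝ) = (s.card:ℝ)⁻¹ * b j := by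
    intro j hj
    rw [← Real.rpow_mul (hb j hj), mul_one_div_cancel hα0.ne', Real.rpow_one]
  have key2 : (s.card:ℝ)⁻¹ * ∑ j ∈ s, b j ^ α ≤ ((s.card:ℝ)⁻¹ * ∑ j ∈ s, b j) ^ α := by
    calc (s.card:ℝ)⁻¹ * ∑ j ∈ s, b j ^ α
        = ∑ j ∈ s, (s.card:ℝ)⁻¹ * b j ^ α := by rw [Finset.mul_sum]
      _ ≤ (∑ j ∈ s, (s.card:ℝ)⁻¹ * (b j ^ α) ^ (1/α:ℝ)) ^ (1/(1/α):ℝ) := key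
      _ = ((s.card:ℝ)⁻¹ * ∑ j ∈ s, b j) ^ α := by
          rw [one_div_one_div, Finset.sum_congr rfl hre, Finset.mul_sum]
  have hid : (s.card:ℝ)^((1:ℝ)-α) = (s.card:ℝ) * ((s.card:ℝ)⁻¹)^α := by
    rw [Real.rpow_sub hn, Real.rpow_one, Real.inv_rpow hn.le, div_eq_mul_inv]
  calc ∑ j ∈ s, b j ^ α = (s.card:ℝ) * ((s.card:ℝ)⁻¹ * ∑ j ∈ s, b j ^ α) := by
        field_simp
    _ ≤ (s.card:ℝ) * (((s.card:ℝ)⁻¹ * ∑ j ∈ s, b j) ^ α) :=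
        mul_le_mul_of_nonneg_left key2 hn.le
    _ = (s.card:ℝ) * (((s.card:ℝ)⁻¹)^α * (∑ j ∈ s, b j) ^ α) := by
        rw [Real.mul_rpow (by positivity) hsum]
    _ = (s.card : ℝ) ^ ((1:ℝ) - α) * (∑ j ∈ s, b j) ^ α := by rw [hid]; ring

private lemma oneSide' (θ C α ε' : ℝ) (hθ0 : 0 < θ) (hC : 1 ≤ C)
    (hα0 : 0 < α) (hα1 : α < 1) (hγ : 0 < α * (1+θ) - θ)
    (hε'0 : 0 < ε') (hε'1 : ε' ≤ 1)
    (u : ℕ → ℝ) (n : ℕ)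
    (hu0 : 0 ≤ u 0)
    (mono : ∀ j, j < n → u j ≤ u (j+1))
    (hsmall : u n ≤ ε')
    (hLoj : ∀ j, 0 < j → j + 1 ≤ n → (u j) ^ (1+θ) ≤ C * (u (j+1) - u (j-1))) :
    ∑ j ∈ Finset.Icc 1 n, (u j - u (j-1)) ^ α ≤
      (4*C) ^ (1-α) * 2 ^ α / (1 - (1/2:ℝ) ^ (α*(1+θ)-θ)) * ε' ^ (α*(1+θ)-θ) := by
  classical
  have hC0 : (0:ℝ) < C := by linarith
  set γ := α*(1+θ)-θ with hγdef
  set r0 : ℝ := (1/2:ℝ) ^ γ with hr0def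
  set K1 : ℝ := (4*C) ^ ((1:ℝ)-α) * 2 ^ α with hK1def
  have hK1pos : 0 < K1 :=
    mul_pos (Real.rpow_pos_of_pos (by linarith) _) (Real.rpow_pos_of_pos (by norm_num) _)
  have hr0nn : 0 ≤ r0 := Real.rpow_nonneg (by norm_num) _
  have hr01 : r0 < 1 := Real.rpow_lt_one (by norm_num) (by norm_num) hγ
  have uLE : ∀ i j, i ≤ j → j ≤ n → u i ≤ u j := mono_le' mono
  have unn : ∀ j, j ≤ n → 0 ≤ u j := fun j hj => hu0.trans (uLE 0 j (Nat.zero_le _) hj)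
  have uub : ∀ j, j ≤ n → u j ≤ ε' := fun j hj => (uLE j n hj le_rfl).trans hsmall
  have hPex : ∀ j, ∃ k : ℕ, ε' * (1/2:ℝ)^(k+1) < u j ∨ u j ≤ 0 := by
    intro j
    by_cases hle : u j ≤ 0
    · exact ⟨0, Or.inr hle⟩
    · push_neg at hle
      obtain ⟨k, hk⟩ := exists_pow_lt_of_lt_one (div_pos hle hε'0) (by norm_num : (1/2:ℝ) < 1)
      refine ⟨k, Or.inl ?_⟩
      have h1 : ε' * (1/2:ℝ)^(k+1) ≤ ε' * (1/2:ℝ)^k :=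
        mul_le_mul_of_nonneg_left
          (pow_le_pow_of_le_one (by norm_num) (by norm_num) (Nat.le_succ k)) hε'0.le
      have h2 : ε' * (1/2:ℝ)^k < u j := by
        rw [mul_comm]
        exact (lt_div_iff₀ hε'0).1 hk
      linarith
  have hbnn : ∀ j ∈ Icc 1 n, 0 ≤ u j - u (j-1) := by
    intro j hj
    rw [Finset.mem_Icc] at hj
    have := uLE (j-1) j (by omega) hj.2
    linarith
  set s0 := (Icc 1 n).filter (fun j => 0 < u j) with hs0
  have hsplit : ∑ j ∈ Icc 1 n, (u j - u (j-1)) ^ α = ∑ j ∈ s0, (u j - u (j-1)) ^ α := by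
    rw [← Finset.sum_filter_add_sum_filter_not (Icc 1 n) (fun j => 0 < u j)
      (fun j => (u j - u (j-1)) ^ α)]
    have hz : ∑ j ∈ (Icc 1 n).filter (fun j => ¬ 0 < u j), (u j - u (j-1)) ^ α = 0 := by
      apply Finset.sum_eq_zero
      intro j hj
      rw [Finset.mem_filter, Finset.mem_Icc] at hj
      obtain ⟨⟨hj1, hjn⟩, hju⟩ := hj
      push_neg at hju
      have h1 : u j = 0 := le_antisymm hju (unn j hjn)
      have h2 : u (j-1) = 0 :=
        le_antisymm (h1 ▸ uLE (j-1) j (by omega) hjn) (unn (j-1) (by omega))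
      rw [h1, h2, sub_zero, Real.zero_rpow hα0.ne']
    rw [hz, add_zero]
  set M := s0.sup (fun j => Nat.find (hPex j)) + 1 with hM
  have hmaps : ∀ j ∈ s0, Nat.find (hPex j) ∈ Finset.range M := by
    intro j hj
    rw [Finset.mem_range, hM]
    exact Nat.lt_succ_of_le (Finset.le_sup (f := fun j => Nat.find (hPex j)) hj)
  have hfib := Finset.sum_fiberwise_of_maps_to hmaps (fun j => (u j - u (j-1)) ^ α)
  have hband : ∀ k, ∑ j ∈ s0.filter (fun j => Nat.find (hPex j) = k), (u j - u (j-1)) ^ α ≤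
      K1 * (ε'^γ * r0^k) := by
    intro k
    set t := s0.filter (fun j => Nat.find (hPex j) = k) with ht
    set η := ε' * (1/2:ℝ)^(k+1) with hη
    have hη0 : 0 < η := mul_pos hε'0 (by positivity)
    have hη1 : η ≤ 1 := by
      have h1 : (1/2:ℝ)^(k+1) ≤ 1 := pow_le_one₀ (by norm_num) (by norm_num)
      nlinarith
    have h2η : 2 * η = ε' * (1/2:ℝ)^k := by
      rw [hη, pow_succ]; ring
    have hmem : ∀ j ∈ t, (1 ≤ j ∧ j ≤ n ∧ 0 < u j) ∧ η < u j ∧ u j ≤ 2*η := by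
      intro j hj
      rw [ht, hs0, Finset.mem_filter, Finset.mem_filter, Finset.mem_Icc] at hj
      obtain ⟨⟨⟨hj1, hjn⟩, hju⟩, hjk⟩ := hj
      have hfind := Nat.find_spec (hPex j)
      rw [hjk] at hfind
      have hlt : η < u j := hfind.resolve_right (not_le.mpr hju)
      have hle : u j ≤ 2*η := by
        rw [h2η]
        cases k with
        | zero => simpa using uub j hjn
        | succ m =>
          have hmlt : m < Nat.find (hPex j) := by omega
          have hm := Nat.find_min (hPex j) hmlt
          rw [not_or, not_lt] at hm
          exact hm.1
      exact ⟨⟨hj1, hjn, hju⟩, hlt, hle⟩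
    rcases t.eq_empty_or_nonempty with hte | hte
    · rw [hte, Finset.sum_empty]
      have : 0 ≤ ε'^γ * r0^k := mul_nonneg (Real.rpow_nonneg hε'0.le _) (pow_nonneg hr0nn _)
      nlinarith
    · set l := t.min' hte with hl
      set r := t.max' hte with hr
      obtain ⟨⟨hl1, hln, hlu⟩, hlη, hl2η⟩ := hmem l (t.min'_mem hte)
      obtain ⟨⟨hr1, hrn, hru⟩, hrη, hr2η⟩ := hmem r (t.max'_mem hte)
      have hlr : l ≤ r := t.min'_le r (t.max'_mem hte)
      have hteq : t = Icc l r := by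
        apply Finset.ext
        intro j
        rw [Finset.mem_Icc]
        constructor
        · intro hj; exact ⟨t.min'_le j hj, t.le_max' j hj⟩
        · rintro ⟨hlj, hjr⟩
          have hjn : j ≤ n := hjr.trans hrn
          have hηj : η < u j := hlη.trans_le (uLE l j hlj hjn)
          have hj2η : u j ≤ 2*η := (uLE j r hjr hrn).trans hr2η
          rw [ht, hs0, Finset.mem_filter, Finset.mem_filter, Finset.mem_Icc]
          refine ⟨⟨⟨by omega, hjn⟩, hη0.trans hηj⟩, ?_⟩
          rw [Nat.find_eq_iff]
          refine ⟨Or.inl hηj, ?_⟩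
          intro m hm
          rw [not_or, not_lt, not_le]
          constructor
          · calc u j ≤ 2*η := hj2η
              _ = ε' * (1/2:ℝ)^k := h2η
              _ ≤ ε' * (1/2:ℝ)^(m+1) := by
                  apply mul_le_mul_of_nonneg_left _ hε'0.le
                  exact pow_le_pow_of_le_one (by norm_num) (by norm_num) (by omega)
          · exact hη0.trans hηj
      have hsumb : ∑ j ∈ t, (u j - u (j-1)) ≤ 2*η := by
        rw [hteq, tele' (by omega : 1 ≤ l) r hlr]
        have := unn (l-1) (by omega)
        linarith
      have hgrow : ∀ i : ℕ, l + 2*i ≤ r → u l + i * (η^(1+θ)/C) ≤ u (l + 2*i) := by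
        intro i
        induction i with
        | zero => intro _; simp
        | succ m ih =>
          intro hi
          have ihm := ih (by omega)
          have hLj := hLoj (l+2*m+1) (by omega) (by omega : l+2*m+1+1 ≤ n)
          have hmid : η ≤ u (l+2*m+1) :=
            hlη.le.trans (uLE l (l+2*m+1) (by omega) (by omega))
          have hpow : η^(1+θ) ≤ (u (l+2*m+1))^(1+θ) :=
            Real.rpow_le_rpow hη0.le hmid (by linarith)
          have hstep : η^(1+θ)/C ≤ u (l+2*m+1+1) - u (l+2*m) := by
            rw [div_le_iff₀ hC0]
            have h1 := hpow.trans hLj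
            have h2 : l+2*m+1-1 = l+2*m := by omega
            rw [h2] at h1
            linarith
          have hidx : l + 2*(m+1) = l+2*m+1+1 := by omega
          rw [hidx]
          push_cast
          linarith
      set i0 := (r - l)/2 with hi0
      have hi0le : l + 2*i0 ≤ r := by omega
      have hg := hgrow i0 hi0le
      have hur : u (l+2*i0) ≤ 2*η := (uLE (l+2*i0) r hi0le hrn).trans hr2η
      have hstep0 : 0 < η^(1+θ)/C := div_pos (Real.rpow_pos_of_pos hη0 _) hC0
      have hi0lt : (i0:ℝ) * (η^(1+θ)/C) < η := by linarith
      have hid2 : C * η^(-θ) * (η^(1+θ)/C) = η := by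
        rw [div_eq_mul_inv]
        have h3 : C * η^(-θ) * (η^(1+θ) * C⁻¹) = (η^(-θ) * η^(1+θ)) * (C * C⁻¹) := by ring
        rw [h3, ← Real.rpow_add hη0, mul_inv_cancel₀ (by linarith : C ≠ 0), mul_one]
        norm_num
      have hi0b : (i0:ℝ) < C * η^(-θ) := by
        by_contra hcon
        push_neg at hcon
        have h4 := mul_le_mul_of_nonneg_right hcon hstep0.le
        rw [hid2] at h4
        linarith
      have hcard : (t.card : ℝ) ≤ 4*C*η^(-θ) := by
        have hc1 : t.card = r + 1 - l := by rw [hteq, Nat.card_Icc]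
        have hc2 : t.card ≤ 2*i0 + 2 := by omega
        have h4 : (1:ℝ) ≤ η^(-θ) :=
          Real.one_le_rpow_of_pos_of_le_one_of_nonpos hη0 hη1 (by linarith)
        have h5 : (1:ℝ) ≤ C * η^(-θ) := by nlinarith
        have h6 : (t.card : ℝ) ≤ 2*(i0:ℝ) + 2 := by exact_mod_cast hc2
        nlinarith
      have hbt : ∀ j ∈ t, 0 ≤ u j - u (j-1) := by
        intro j hj
        obtain ⟨⟨hj1, hjn, _⟩, _, _⟩ := hmem j hj
        exact hbnn j (Finset.mem_Icc.mpr ⟨hj1, hjn⟩)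
      have hbsnn : 0 ≤ ∑ j ∈ t, (u j - u (j-1)) := Finset.sum_nonneg hbt
      have hηθnn : (0:ℝ) ≤ η^(-θ) := (Real.rpow_pos_of_pos hη0 _).le
      calc ∑ j ∈ t, (u j - u (j-1)) ^ α
          ≤ (t.card:ℝ)^((1:ℝ)-α) * (∑ j ∈ t, (u j - u (j-1)))^α :=
            jensen' hα0 hα1.le t _ hbt hte
        _ ≤ (4*C*η^(-θ))^((1:ℝ)-α) * (2*η)^α := by
            apply mul_le_mul
            · exact Real.rpow_le_rpow (Nat.cast_nonneg _) hcard (by linarith)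
            · exact Real.rpow_le_rpow hbsnn hsumb hα0.le
            · exact Real.rpow_nonneg hbsnn α
            · exact Real.rpow_nonneg (by positivity) _
        _ = (4*C)^((1:ℝ)-α) * (η^(-θ))^((1:ℝ)-α) * (2^α * η^α) := by
            rw [Real.mul_rpow (by positivity : (0:ℝ) ≤ 4*C) hηθnn,
                Real.mul_rpow (by norm_num : (0:ℝ) ≤ 2) hη0.le]
        _ = (4*C)^((1:ℝ)-α) * 2^α * (η ^ (-θ*((1:ℝ)-α)) * η^α) := by
            rw [← Real.rpow_mul hη0.le]
            ring
        _ = K1 * η ^ γ := by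
            rw [← Real.rpow_add hη0, hK1def]
            congr 1
            rw [hγdef]
            ring
        _ ≤ K1 * (ε'^γ * r0^k) := by
            apply mul_le_mul_of_nonneg_left _ hK1pos.le
            have hηle : η ≤ ε' * (1/2:ℝ)^k := by
              rw [hη]
              exact mul_le_mul_of_nonneg_left
                (pow_le_pow_of_le_one (by norm_num) (by norm_num) (Nat.le_succ k)) hε'0.le
            calc η^γ ≤ (ε' * (1/2:ℝ)^k)^γ := Real.rpow_le_rpow hη0.le hηle hγ.le
              _ = ε'^γ * ((1/2:ℝ)^k)^γ := Real.mul_rpow hε'0.le (by positivity)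
              _ = ε'^γ * r0^k := by
                  have hpow2 : ((1/2:ℝ)^k : ℝ)^γ = r0^k := by
                    rw [hr0def, ← Real.rpow_natCast (1/2:ℝ) k, ← Real.rpow_mul (by norm_num),
                        mul_comm, Real.rpow_mul (by norm_num), Real.rpow_natCast]
                  rw [hpow2]
  rw [hsplit, ← hfib]
  have hgeom : ∑ k ∈ Finset.range M, r0^k ≤ 1/(1-r0) := by
    rw [geom_sum_eq (by linarith : r0 ≠ 1)]
    have h7 : (r0^M - 1)/(r0-1) = (1 - r0^M)/(1-r0) := by
      rw [show r0^M - 1 = -(1-r0^M) from by ring, show r0 - 1 = -(1-r0) from by ring,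
          neg_div_neg_eq]
    rw [h7]
    rw [div_le_div_iff_of_pos_right (by linarith : (0:ℝ) < 1 - r0)]
    have : 0 ≤ r0^M := pow_nonneg hr0nn M
    linarith
  calc ∑ k ∈ Finset.range M, ∑ j ∈ s0.filter (fun j => Nat.find (hPex j) = k),
        (u j - u (j-1)) ^ α
      ≤ ∑ k ∈ Finset.range M, K1 * (ε'^γ * r0^k) :=
        Finset.sum_le_sum (fun k _ => hband k)
    _ = K1 * ε'^γ * ∑ k ∈ Finset.range M, r0^k := by
        rw [Finset.mul_sum]
        exact Finset.sum_congr rfl (fun k _ => by ring)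
    _ ≤ K1 * ε'^γ * (1/(1-r0)) := by
        apply mul_le_mul_of_nonneg_left hgeom
        exact mul_nonneg hK1pos.le (Real.rpow_nonneg hε'0.le _)
    _ = (4*C) ^ ((1:ℝ)-α) * 2 ^ α / (1 - r0) * ε' ^ γ := by
        rw [hK1def]; ring

/-- Discrete Łojasiewicz summability lemma: for `θ ∈ (1/3, 1)`, `C ≥ 1`,
`α ∈ (0, 1)` with `α (1 + θ) > 1`, and `ε > 0`, there is `δ > 0` (depending only on
`θ, C, α, ε`) such that: for every nondecreasing finite sequence `a₀ ≤ ⋯ ≤ a_N` with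
`a_N - a₀ ≤ δ` admitting `Θ ∈ ℝ` with `|a_j - Θ|^{1+θ} ≤ C (a_{j+1} - a_{j-1})` for
all `1 ≤ j ≤ N - 1`, one has `Σ_{j=1}^N (a_j - a_{j-1})^α ≤ ε`. -/
theorem stmt_7 (θ C α ε : ℝ) (hθ : 1 / 3 < θ) (hθ1 : θ < 1) (hC : 1 ≤ C)
    (hα0 : 0 < α) (hα1 : α < 1) (hαθ : 1 < α * (1 + θ)) (hε : 0 < ε) :
    ∃ δ : ℝ, 0 < δ ∧ ∀ (N : ℕ) (a : ℕ → ℝ),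
      (∀ j, j < N → a j ≤ a (j + 1)) →
      a N - a 0 ≤ δ →
      (∃ Θ : ℝ, ∀ j, 1 ≤ j → j + 1 ≤ N →
        |a j - Θ| ^ (1 + θ) ≤ C * (a (j + 1) - a (j - 1))) →
      ∑ j ∈ Finset.Icc 1 N, (a j - a (j - 1)) ^ α ≤ ε := by
  have hθ0 : 0 < θ := by linarith
  have hC0 : (0:ℝ) < C := by linarith
  have hγ : 0 < α * (1+θ) - θ := by linarith
  set γ := α*(1+θ)-θ with hγdef
  set r0 : ℝ := (1/2:ℝ)^γ with hr0def
  have hr01 : r0 < 1 := Real.rpow_lt_one (by norm_num) (by norm_num) hγ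
  have hr0nn : 0 ≤ r0 := Real.rpow_nonneg (by norm_num) _
  set K2 : ℝ := (4*C)^(1-α) * 2^α / (1 - r0) with hK2def
  have hK2pos : 0 < K2 :=
    div_pos (mul_pos (Real.rpow_pos_of_pos (by linarith) _)
      (Real.rpow_pos_of_pos (by norm_num) _)) (by linarith)
  set E := ε / (4 + 2*K2) with hEdef
  have hEpos : 0 < E := div_pos hε (by linarith)
  have hEε : 4*E + 2*K2*E = ε := by
    rw [hEdef]; field_simp
  set μ := min α γ with hμdef
  have hμ0 : 0 < μ := lt_min hα0 hγ
  set ε₀ := min 1 (E ^ (1/μ)) with hε₀def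
  have hε₀0 : 0 < ε₀ := lt_min one_pos (Real.rpow_pos_of_pos hEpos _)
  have hε₀1 : ε₀ ≤ 1 := min_le_left _ _
  have hε₀E : ε₀ ^ μ ≤ E := by
    calc ε₀ ^ μ ≤ (E^(1/μ)) ^ μ := Real.rpow_le_rpow hε₀0.le (min_le_right _ _) hμ0.le
      _ = E := by rw [← Real.rpow_mul hEpos.le, one_div_mul_cancel hμ0.ne', Real.rpow_one]
  have hpowE : ∀ x : ℝ, 0 ≤ x → x ≤ ε₀ → ∀ p : ℝ, μ ≤ p → x ^ p ≤ E := by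
    intro x hx0 hx p hp
    calc x ^ p ≤ ε₀ ^ p := Real.rpow_le_rpow hx0 hx (by linarith)
      _ ≤ ε₀ ^ μ := Real.rpow_le_rpow_of_exponent_ge hε₀0 hε₀1 hp
      _ ≤ E := hε₀E
  set δ := ε₀ ^ (1+θ) / C with hδdef
  have hδ0 : 0 < δ := div_pos (Real.rpow_pos_of_pos hε₀0 _) hC0
  have hδε₀ : δ ≤ ε₀ := by
    have h1 : ε₀ ^ (1+θ) ≤ ε₀ ^ (1:ℝ) :=
      Real.rpow_le_rpow_of_exponent_ge hε₀0 hε₀1 (by linarith)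
    rw [Real.rpow_one] at h1
    calc δ ≤ ε₀ ^ (1+θ) := by
          rw [hδdef]; exact div_le_self (Real.rpow_nonneg hε₀0.le _) hC
      _ ≤ ε₀ := h1
  have hCδ : C * δ = ε₀ ^ (1+θ) := by
    rw [hδdef, mul_div_cancel₀ _ hC0.ne']
  refine ⟨δ, hδ0, ?_⟩
  intro N a hmono hδN hex
  obtain ⟨Θ, hLoj⟩ := hex
  have ha : ∀ i j, i ≤ j → j ≤ N → a i ≤ a j := mono_le' hmono
  have hbnn : ∀ j, 1 ≤ j → j ≤ N → 0 ≤ a j - a (j-1) := by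
    intro j h1 h2
    have := ha (j-1) j (by omega) h2; linarith
  have hbδ : ∀ j, 1 ≤ j → j ≤ N → a j - a (j-1) ≤ ε₀ := by
    intro j h1 h2
    have l0 := ha 0 (j-1) (Nat.zero_le _) (by omega)
    have lN := ha j N h2 le_rfl
    linarith
  have hub : ∀ j, 1 ≤ j → j + 1 ≤ N → |a j - Θ| ≤ ε₀ := by
    intro j hj1 hjN
    have h1 := hLoj j hj1 hjN
    have h2 : a (j+1) - a (j-1) ≤ δ := by
      have h3 := ha 0 (j-1) (Nat.zero_le _) (by omega)
      have h4 := ha (j+1) N hjN le_rfl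
      linarith
    have h5 : |a j - Θ| ^ (1+θ) ≤ ε₀ ^ (1+θ) := by
      calc |a j - Θ| ^ (1+θ) ≤ C * (a (j+1) - a (j-1)) := h1
        _ ≤ C * δ := by nlinarith
        _ = ε₀ ^ (1+θ) := hCδ
    have h6 : (0:ℝ) < 1 + θ := by linarith
    calc |a j - Θ| = (|a j - Θ| ^ (1+θ)) ^ (1/(1+θ)) := by
          rw [← Real.rpow_mul (abs_nonneg _), mul_one_div_cancel h6.ne', Real.rpow_one]
      _ ≤ (ε₀ ^ (1+θ)) ^ (1/(1+θ)) :=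
          Real.rpow_le_rpow (Real.rpow_nonneg (abs_nonneg _) _) h5 (by positivity)
      _ = ε₀ := by rw [← Real.rpow_mul hε₀0.le, mul_one_div_cancel h6.ne', Real.rpow_one]
  have hEε' : E ≤ ε := by nlinarith
  by_cases hN1 : N ≤ 1
  · interval_cases N
    · simp [hε.le]
    · rw [show Finset.Icc (1:ℕ) 1 = {1} from rfl, Finset.sum_singleton]
      have h := hpowE (a 1 - a 0) (by simpa using hbnn 1 le_rfl le_rfl)
        (by simpa using hbδ 1 le_rfl le_rfl) α (min_le_left _ _)
      simp only [show (1:ℕ)-1 = 0 from rfl]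
      linarith
  push_neg at hN1
  have hN2 : 2 ≤ N := hN1
  -- one-sided estimates
  have rightP : ∀ p, 1 ≤ p → p ≤ N-1 → Θ ≤ a p →
      ∑ j ∈ Finset.Icc (p+1) (N-1), (a j - a (j-1))^α ≤ K2 * ε₀ ^ γ := by
    intro p hp1 hpN hap
    have hos := oneSide' θ C α ε₀ hθ0 hC hα0 hα1 hγ hε₀0 hε₀1
      (fun i => a (p+i) - Θ) (N-1-p)
      (by simpa using hap)
      (by
        intro j hj
        show a (p+j) - Θ ≤ a (p+(j+1)) - Θ
        have h := hmono (p+j) (by omega)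
        have he : p + (j+1) = (p+j)+1 := by omega
        rw [he]; linarith)
      (by
        show a (p+(N-1-p)) - Θ ≤ ε₀
        have he : p + (N-1-p) = N-1 := by omega
        rw [he]
        have := hub (N-1) (by omega) (by omega)
        have := le_abs_self (a (N-1) - Θ)
        linarith)
      (by
        intro i hi0 hin
        show (a (p+i) - Θ) ^ (1+θ) ≤ C * ((a (p+(i+1)) - Θ) - (a (p+(i-1)) - Θ))
        have hΘ : Θ ≤ a (p+i) := hap.trans (ha p (p+i) (by omega) (by omega))
        have h := hLoj (p+i) (by omega) (by omega)
        rw [abs_of_nonneg (by linarith : (0:ℝ) ≤ a (p+i) - Θ)] at h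
        have e1 : p+(i+1) = (p+i)+1 := by omega
        have e2 : p+(i-1) = (p+i)-1 := by omega
        rw [e1, e2]
        have e3 : (a ((p+i)+1) - Θ) - (a ((p+i)-1) - Θ) = a ((p+i)+1) - a ((p+i)-1) := by ring
        rw [e3]
        exact h)
    have hsum : ∑ i ∈ Finset.Icc 1 (N-1-p),
        ((fun i => a (p+i) - Θ) i - (fun i => a (p+i) - Θ) (i-1)) ^ α
        = ∑ j ∈ Finset.Icc (p+1) (N-1), (a j - a (j-1))^α := by
      apply Finset.sum_nbij' (fun i => p + i) (fun j => j - p)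
      · intro i hi; rw [Finset.mem_Icc] at *; omega
      · intro j hj; rw [Finset.mem_Icc] at *; omega
      · intro i hi; omega
      · intro j hj; rw [Finset.mem_Icc] at hj; omega
      · intro i hi
        rw [Finset.mem_Icc] at hi
        show ((a (p+i) - Θ) - (a (p+(i-1)) - Θ)) ^ α = (a (p+i) - a ((p+i)-1)) ^ α
        have e2 : p+(i-1) = (p+i)-1 := by omega
        rw [e2]
        ring_nf
    rw [hsum] at hos
    exact hos
  have leftP : ∀ t, 1 ≤ t → t ≤ N-1 → a t ≤ Θ →
      ∑ j ∈ Finset.Icc 2 t, (a j - a (j-1))^α ≤ K2 * ε₀ ^ γ := by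
    intro t ht1 htN hat
    have hos := oneSide' θ C α ε₀ hθ0 hC hα0 hα1 hγ hε₀0 hε₀1
      (fun i => Θ - a (t-i)) (t-1)
      (by
        show (0:ℝ) ≤ Θ - a (t-0)
        have : t - 0 = t := by omega
        rw [this]; linarith)
      (by
        intro j hj
        show Θ - a (t-j) ≤ Θ - a (t-(j+1))
        have h := hmono (t-(j+1)) (by omega)
        have he : t-(j+1)+1 = t-j := by omega
        rw [he] at h; linarith)
      (by
        show Θ - a (t-(t-1)) ≤ ε₀
        have he : t-(t-1) = 1 := by omega
        rw [he]
        have := hub 1 le_rfl (by omega)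
        have := neg_abs_le (a 1 - Θ)
        linarith)
      (by
        intro i hi0 hin
        show (Θ - a (t-i)) ^ (1+θ) ≤ C * ((Θ - a (t-(i+1))) - (Θ - a (t-(i-1))))
        have hΘ : a (t-i) ≤ Θ := (ha (t-i) t (by omega) (by omega)).trans hat
        have h := hLoj (t-i) (by omega) (by omega)
        rw [abs_of_nonpos (by linarith : a (t-i) - Θ ≤ 0)] at h
        have e1 : t-(i-1) = (t-i)+1 := by omega
        have e2 : t-(i+1) = (t-i)-1 := by omega
        rw [e1, e2]
        have e3 : (Θ - a ((t-i)-1)) - (Θ - a ((t-i)+1)) = a ((t-i)+1) - a ((t-i)-1) := by ring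
        have e4 : -(a (t-i) - Θ) = Θ - a (t-i) := by ring
        rw [e4] at h
        calc (Θ - a (t-i)) ^ (1+θ) ≤ C * (a ((t-i)+1) - a ((t-i)-1)) := h
          _ = C * ((Θ - a ((t-i)-1)) - (Θ - a ((t-i)+1))) := by ring
      )
    have hsum : ∑ i ∈ Finset.Icc 1 (t-1),
        ((fun i => Θ - a (t-i)) i - (fun i => Θ - a (t-i)) (i-1)) ^ α
        = ∑ j ∈ Finset.Icc 2 t, (a j - a (j-1))^α := by
      apply Finset.sum_nbij' (fun i => t + 1 - i) (fun j => t + 1 - j)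
      · intro i hi; rw [Finset.mem_Icc] at *; omega
      · intro j hj; rw [Finset.mem_Icc] at *; omega
      · intro i hi; rw [Finset.mem_Icc] at hi; omega
      · intro j hj; rw [Finset.mem_Icc] at hj; omega
      · intro i hi
        rw [Finset.mem_Icc] at hi
        show ((Θ - a (t-i)) - (Θ - a (t-(i-1)))) ^ α = (a (t+1-i) - a ((t+1-i)-1)) ^ α
        have e1 : t-(i-1) = t+1-i := by omega
        have e2 : (t+1-i)-1 = t-i := by omega
        rw [e1, e2]
        ring_nf
    rw [hsum] at hos
    exact hos
  -- split off first and last increments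
  have hsplit : ∑ j ∈ Finset.Icc 1 N, (a j - a (j-1))^α
      = (a 1 - a (1-1))^α + ((a N - a (N-1))^α + ∑ j ∈ Finset.Icc 2 (N-1), (a j - a (j-1))^α) := by
    have h1 : Finset.Icc 1 N = insert 1 (insert N (Finset.Icc 2 (N-1))) := by
      ext j
      simp only [Finset.mem_Icc, Finset.mem_insert]
      omega
    rw [h1, Finset.sum_insert, Finset.sum_insert]
    · simp only [Finset.mem_Icc]; omega
    · simp only [Finset.mem_insert, Finset.mem_Icc]; omega
  have hb1 : (a 1 - a (1-1))^α ≤ E := by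
    simp only [show (1:ℕ)-1 = 0 from rfl]
    exact hpowE _ (by simpa using hbnn 1 le_rfl (by omega))
      (by simpa using hbδ 1 le_rfl (by omega)) α (min_le_left _ _)
  have hbN : (a N - a (N-1))^α ≤ E := by
    exact hpowE _ (hbnn N (by omega) le_rfl) (hbδ N (by omega) le_rfl) α (min_le_left _ _)
  have hKE : K2 * ε₀ ^ γ ≤ K2 * E :=
    mul_le_mul_of_nonneg_left (hpowE ε₀ hε₀0.le le_rfl γ (min_le_right _ _)) hK2pos.le
  have hmidnn : ∀ (s : Finset ℕ), (∀ j ∈ s, 1 ≤ j ∧ j ≤ N) →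
      0 ≤ ∑ j ∈ s, (a j - a (j-1))^α := by
    intro s hs
    exact Finset.sum_nonneg (fun j hj => Real.rpow_nonneg (hbnn j (hs j hj).1 (hs j hj).2) α)
  have hmain : ∑ j ∈ Finset.Icc 2 (N-1), (a j - a (j-1))^α ≤ 2*E + 2*(K2*E) := by
    by_cases hTne : ((Finset.Icc 1 (N-1)).filter (fun j => a j ≤ Θ)).Nonempty
    · obtain ⟨t, ht1, htN, hat, hmax⟩ :
          ∃ t, 1 ≤ t ∧ t ≤ N-1 ∧ a t ≤ Θ ∧
            ∀ j ∈ (Finset.Icc 1 (N-1)).filter (fun j => a j ≤ Θ), j ≤ t := by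
        have htmem := Finset.max'_mem _ hTne
        rw [Finset.mem_filter, Finset.mem_Icc] at htmem
        exact ⟨Finset.max' _ hTne, htmem.1.1, htmem.1.2, htmem.2,
          fun j hj => Finset.le_max' _ j hj⟩
      have hLeft := (leftP t ht1 htN hat).trans hKE
      by_cases htN2 : t ≤ N-2
      · have hΘt1 : Θ ≤ a (t+1) := by
          by_contra hcon
          push_neg at hcon
          have hmem : t+1 ∈ (Finset.Icc 1 (N-1)).filter (fun j => a j ≤ Θ) := by
            rw [Finset.mem_filter, Finset.mem_Icc]
            exact ⟨⟨by omega, by omega⟩, hcon.le⟩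
          have := hmax _ hmem
          omega
        have hRight := (rightP (t+1) (by omega) (by omega) hΘt1).trans hKE
        have hmid : (a (t+1) - a ((t+1)-1))^α ≤ 2*E := by
          have e1 : (t+1)-1 = t := by omega
          rw [e1]
          have h1 := hub t ht1 (by omega)
          have h2 := hub (t+1) (by omega) (by omega)
          have h3 := le_abs_self (a (t+1) - Θ)
          have h4 := neg_abs_le (a t - Θ)
          have h5 : a (t+1) - a t ≤ 2*ε₀ := by linarith
          have h6 : 0 ≤ a (t+1) - a t := by
            have := hmono t (by omega); linarith
          calc (a (t+1) - a t)^α ≤ (2*ε₀)^α := Real.rpow_le_rpow h6 h5 hα0.le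
            _ = 2^α * ε₀^α := Real.mul_rpow (by norm_num) hε₀0.le
            _ ≤ 2 * E := by
                have h7 : (2:ℝ)^α ≤ 2 := by
                  calc (2:ℝ)^α ≤ (2:ℝ)^(1:ℝ) :=
                        Real.rpow_le_rpow_of_exponent_le one_le_two hα1.le
                    _ = 2 := Real.rpow_one 2
                have h8 : ε₀^α ≤ E := hpowE ε₀ hε₀0.le le_rfl α (min_le_left _ _)
                have h9 : (0:ℝ) ≤ ε₀^α := Real.rpow_nonneg hε₀0.le α
                nlinarith
        have hdec : ∑ j ∈ Finset.Icc 2 (N-1), (a j - a (j-1))^α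
            = ∑ j ∈ Finset.Icc 2 t, (a j - a (j-1))^α
              + ((a (t+1) - a ((t+1)-1))^α + ∑ j ∈ Finset.Icc (t+2) (N-1), (a j - a (j-1))^α) := by
          have e1 : Finset.Icc 2 (N-1) = Finset.Ioc 1 (N-1) := (Finset.Icc_add_one_left_eq_Ioc 1 (N-1))
          have e2 : Finset.Icc 2 t = Finset.Ioc 1 t := (Finset.Icc_add_one_left_eq_Ioc 1 t)
          have e3 : Finset.Icc (t+2) (N-1) = Finset.Ioc (t+1) (N-1) := (Finset.Icc_add_one_left_eq_Ioc (t+1) (N-1))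
          have e4 : Finset.Ioc t (t+1) = {t+1} := by
            ext j; simp only [Finset.mem_Ioc, Finset.mem_singleton]; omega
          rw [e1, e2, e3,
            ← Finset.sum_Ioc_consecutive (fun j => (a j - a (j-1))^α)
              (by omega : 1 ≤ t) (by omega : t ≤ N-1),
            ← Finset.sum_Ioc_consecutive (fun j => (a j - a (j-1))^α)
              (by omega : t ≤ t+1) (by omega : t+1 ≤ N-1),
            e4, Finset.sum_singleton]
        rw [hdec]
        linarith
      · have ht' : t = N-1 := by omega
        have hsub : ∑ j ∈ Finset.Icc 2 (N-1), (a j - a (j-1))^α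
            = ∑ j ∈ Finset.Icc 2 t, (a j - a (j-1))^α := by rw [ht']
        rw [hsub]
        have h0 : 0 ≤ K2 * E := mul_nonneg hK2pos.le hEpos.le
        linarith [hEpos]
    · have hΘ1 : Θ ≤ a 1 := by
        by_contra hcon
        push_neg at hcon
        exact hTne ⟨1, by
          rw [Finset.mem_filter, Finset.mem_Icc]
          exact ⟨⟨le_rfl, by omega⟩, hcon.le⟩⟩
      have hRight := (rightP 1 le_rfl (by omega) hΘ1).trans hKE
      have e1 : (1:ℕ)+1 = 2 := rfl
      rw [e1] at hRight
      have h0 : 0 ≤ K2 * E := mul_nonneg hK2pos.le hEpos.le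
      linarith [hEpos]
  rw [hsplit]
  linarith
end

section
/- Let h : (0, ∞) → [0, ∞) be continuous, W₀ ∈ ℝ, W(τ) := W₀ − 2·∫_1^τ h(s)/s ds, and N(τ) := τ^{-1}·∫_0^τ W(s) ds, where we assume ∫_0^1 |W(s)| ds < ∞. Let ε ∈ (0, 1) and let 0 < δ < ε⁴/2 with δ⁻¹ ≥ ε⁻¹ + 1. If N(δ) − N(δ⁻¹) ≤ δ, then W(ε) − W(ε⁻¹) ≤ ε. -/
open MeasureTheory

set_option maxHeartbeats 1000000 in
/-- Abstract version of "Nash-entropy pinching implies `W`-entropy pinching":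
let `h : (0,∞) → [0,∞)` be continuous, `W(τ) = W₀ - 2 ∫_1^τ h(s)/s ds`, and
`N(τ) = τ⁻¹ ∫_0^τ W(s) ds` (with `W` integrable near `0`). If `ε ∈ (0,1)`,
`0 < δ < ε⁴/2` with `δ⁻¹ ≥ ε⁻¹ + 1`, and `N(δ) - N(δ⁻¹) ≤ δ`, then
`W(ε) - W(ε⁻¹) ≤ ε`. -/
theorem stmt_10 (h : ℝ → ℝ) (hcont : ContinuousOn h (Set.Ioi (0 : ℝ)))
    (hnn : ∀ s : ℝ, 0 < s → 0 ≤ h s) (W₀ : ℝ)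
    (W : ℝ → ℝ) (hW : ∀ τ : ℝ, W τ = W₀ - 2 * ∫ s in (1 : ℝ)..τ, h s / s)
    (N : ℝ → ℝ) (hN : ∀ τ : ℝ, N τ = τ⁻¹ * ∫ s in (0 : ℝ)..τ, W s)
    (hInt : IntegrableOn W (Set.Ioc (0 : ℝ) 1))
    (ε δ : ℝ) (hε0 : 0 < ε) (hε1 : ε < 1)
    (hδ0 : 0 < δ) (hδ1 : δ < ε ^ 4 / 2) (hδ2 : ε⁻¹ + 1 ≤ δ⁻¹)
    (hyp : N δ - N δ⁻¹ ≤ δ) :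
    W ε - W ε⁻¹ ≤ ε := by
  -- numerics
  have hε4 : ε ^ 4 < ε := by
    have key : 0 < ε * (1 - ε) * (1 + ε + ε ^ 2) :=
      mul_pos (mul_pos hε0 (by linarith)) (by positivity)
    nlinarith [key]
  have hδhalf : δ < 1 / 2 := by nlinarith [hε4]
  have hδε : δ < ε := by nlinarith [hε4]
  have hεinv1 : 1 < ε⁻¹ := by
    have h' := mul_lt_mul_of_pos_right hε1 (inv_pos.2 hε0)
    rwa [mul_inv_cancel₀ (ne_of_gt hε0), one_mul] at h'
  have hδinv0 : 0 < δ⁻¹ := by positivity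
  have hεinv0 : 0 < ε⁻¹ := by positivity
  have hεδinv : ε⁻¹ < δ⁻¹ := by linarith
  have hδδ : δ * δ⁻¹ = 1 := mul_inv_cancel₀ (ne_of_gt hδ0)
  have hεε : ε * ε⁻¹ = 1 := mul_inv_cancel₀ (ne_of_gt hε0)
  have hδ1' : δ < 1 := by linarith
  have hδεinv : δ < ε⁻¹ := by linarith
  set g : ℝ → ℝ := fun u => h u / u with hgdef
  have hgcont : ContinuousOn g (Set.Ioi (0 : ℝ)) :=
    hcont.div continuousOn_id fun x hx => ne_of_gt hx
  have hsub : ∀ a b : ℝ, 0 < a → 0 < b → Set.uIcc a b ⊆ Set.Ioi (0 : ℝ) := by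
    intro a b ha hb x hx
    simp only [Set.mem_Ioi]
    rcases le_total a b with hab | hab
    · rw [Set.uIcc_of_le hab] at hx; exact lt_of_lt_of_le ha hx.1
    · rw [Set.uIcc_of_ge hab] at hx; exact lt_of_lt_of_le hb hx.1
  have hgint : ∀ a b : ℝ, 0 < a → 0 < b → IntervalIntegrable g volume a b := by
    intro a b ha hb
    exact (hgcont.mono (hsub a b ha hb)).intervalIntegrable
  have hhint : ∀ a b : ℝ, 0 < a → 0 < b → IntervalIntegrable h volume a b := by
    intro a b ha hb
    exact (hcont.mono (hsub a b ha hb)).intervalIntegrable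
  have hgnn : ∀ u : ℝ, 0 < u → 0 ≤ g u := fun u hu => div_nonneg (hnn u hu) hu.le
  -- difference formula for W
  have hWdiff : ∀ a b : ℝ, 0 < a → 0 < b → W a - W b = 2 * ∫ u in a..b, g u := by
    intro a b ha hb
    have h1 : (∫ s in (1:ℝ)..b, g s) - ∫ s in (1:ℝ)..a, g s = ∫ s in a..b, g s :=
      intervalIntegral.integral_interval_sub_left (hgint 1 b one_pos hb)
        (hgint 1 a one_pos ha)
    rw [hW a, hW b]
    linarith [h1]
  -- W is antitone on (0, ∞)
  have hWanti : ∀ a b : ℝ, 0 < a → a ≤ b → W b ≤ W a := by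
    intro a b ha hab
    have hb : 0 < b := lt_of_lt_of_le ha hab
    have h1 : (0:ℝ) ≤ ∫ u in a..b, g u :=
      intervalIntegral.integral_nonneg hab fun u hu => hgnn u (lt_of_lt_of_le ha hu.1)
    have h2 := hWdiff a b ha hb
    linarith
  -- continuity of W on (0,∞)
  have hIder : ∀ c t : ℝ, 0 < c → 0 < t →
      HasDerivAt (fun x => ∫ s in c..x, g s) (g t) t := by
    intro c t hc ht
    exact intervalIntegral.integral_hasDerivAt_right (hgint c t hc ht)
      (ContinuousOn.stronglyMeasurableAtFilter isOpen_Ioi hgcont t ht)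
      (hgcont.continuousAt (isOpen_Ioi.mem_nhds ht))
  have hWcont : ContinuousOn W (Set.Ioi (0 : ℝ)) := by
    have hc : ContinuousOn (fun t => W₀ - 2 * ∫ s in (1:ℝ)..t, g s) (Set.Ioi (0:ℝ)) := by
      apply ContinuousOn.sub continuousOn_const
      apply ContinuousOn.mul continuousOn_const
      intro t ht
      exact ((hIder 1 t one_pos ht).continuousAt).continuousWithinAt
    exact hc.congr fun t _ => hW t
  have hWintIcc : ∀ a b : ℝ, 0 < a → 0 < b → IntervalIntegrable W volume a b :=
    fun a b ha hb => (hWcont.mono (hsub a b ha hb)).intervalIntegrable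
  -- F s = ∫_s^{δ⁻¹} g
  set F : ℝ → ℝ := fun s => ∫ u in s..δ⁻¹, g u with hFdef
  have hFder : ∀ s : ℝ, 0 < s → HasDerivAt F (-(g s)) s := by
    intro s hs
    have h1 := hIder δ⁻¹ s hδinv0 hs
    have h2 : F = fun x => -∫ u in δ⁻¹..x, g u :=
      funext fun x => intervalIntegral.integral_symm δ⁻¹ x
    rw [h2]
    exact h1.neg
  have hFcont : ContinuousOn F (Set.Ioi (0:ℝ)) :=
    fun s hs => ((hFder s hs).continuousAt).continuousWithinAt
  have hmempos : ∀ x ∈ Set.uIcc δ δ⁻¹, 0 < x := fun x hx => hsub δ δ⁻¹ hδ0 hδinv0 hx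
  -- integration by parts: ∫_δ^{δ⁻¹} F = ∫_δ^{δ⁻¹} h - δ * F δ
  have hibp : (∫ s in δ..δ⁻¹, F s) = (∫ s in δ..δ⁻¹, h s) - δ * F δ := by
    have hψ : ∀ x ∈ Set.uIcc δ δ⁻¹, HasDerivAt (fun s => s * F s) (F x - h x) x := by
      intro x hx
      have hx0 := hmempos x hx
      have hxne : x ≠ 0 := ne_of_gt hx0
      have h1 : HasDerivAt (fun s : ℝ => s * F s) (1 * F x + x * -(g x)) x :=
        (hasDerivAt_id x).mul (hFder x hx0)
      have hx' : x * g x = h x := by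
        show x * (h x / x) = h x
        field_simp
      convert h1 using 1
      rw [← hx']; ring
    have hFint : IntervalIntegrable F volume δ δ⁻¹ :=
      (hFcont.mono (hsub δ δ⁻¹ hδ0 hδinv0)).intervalIntegrable
    have hint : IntervalIntegrable (fun s => F s - h s) volume δ δ⁻¹ :=
      hFint.sub (hhint δ δ⁻¹ hδ0 hδinv0)
    have heq := intervalIntegral.integral_eq_sub_of_hasDerivAt hψ hint
    have hF0 : F δ⁻¹ = 0 := intervalIntegral.integral_same
    rw [intervalIntegral.integral_sub hFint (hhint δ δ⁻¹ hδ0 hδinv0)] at heq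
    rw [hF0] at heq
    linarith
  -- ∫_δ^{δ⁻¹} W = (δ⁻¹ - δ) * W δ⁻¹ + 2 * ∫_δ^{δ⁻¹} F
  have hWrepr : (∫ s in δ..δ⁻¹, W s)
      = (δ⁻¹ - δ) * W δ⁻¹ + 2 * ∫ s in δ..δ⁻¹, F s := by
    have hcongr : ∫ s in δ..δ⁻¹, W s = ∫ s in δ..δ⁻¹, (W δ⁻¹ + 2 * F s) := by
      apply intervalIntegral.integral_congr
      intro s hs
      have hs0 := hmempos s hs
      have hd := hWdiff s δ⁻¹ hs0 hδinv0
      show W s = W δ⁻¹ + 2 * ∫ u in s..δ⁻¹, g u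
      linarith
    rw [hcongr]
    have hFint : IntervalIntegrable (fun s => 2 * F s) volume δ δ⁻¹ :=
      ((hFcont.mono (hsub δ δ⁻¹ hδ0 hδinv0)).intervalIntegrable).const_mul 2
    rw [intervalIntegral.integral_add intervalIntegrable_const hFint,
      intervalIntegral.integral_const, intervalIntegral.integral_const_mul]
    simp [smul_eq_mul]
  -- C := ∫_{Ioc 0 δ} (W s - W δ) ≥ 0
  have hIocsub : Set.Ioc (0:ℝ) δ ⊆ Set.Ioc (0:ℝ) 1 := Set.Ioc_subset_Ioc le_rfl hδ1'.le
  have hWIoc : IntegrableOn W (Set.Ioc (0:ℝ) δ) := hInt.mono_set hIocsub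
  set C : ℝ := ∫ s in Set.Ioc (0:ℝ) δ, (W s - W δ) with hCdef
  have hC0 : 0 ≤ C := by
    apply setIntegral_nonneg measurableSet_Ioc
    intro s hs
    have := hWanti s δ hs.1 hs.2
    linarith
  -- ∫_0^δ W = C + δ * W δ
  have hW0δ : (∫ s in (0:ℝ)..δ, W s) = C + δ * W δ := by
    rw [intervalIntegral.integral_of_le hδ0.le]
    have h1 : C = (∫ s in Set.Ioc (0:ℝ) δ, W s) - ∫ s in Set.Ioc (0:ℝ) δ, W δ := by
      rw [hCdef, integral_sub hWIoc (integrableOn_const measure_Ioc_lt_top.ne)]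
    have h2 : (∫ s in Set.Ioc (0:ℝ) δ, (W δ : ℝ)) = δ * W δ := by
      rw [setIntegral_const, measureReal_def, Real.volume_Ioc, ENNReal.toReal_ofReal (by linarith), smul_eq_mul]
      ring
    rw [h1, h2] at *
    linarith
  -- split ∫_0^{δ⁻¹}
  have hWint0δ : IntervalIntegrable W volume 0 δ := by
    rw [intervalIntegrable_iff_integrableOn_Ioc_of_le hδ0.le]; exact hWIoc
  have hsplit : (∫ s in (0:ℝ)..δ⁻¹, W s)
      = (∫ s in (0:ℝ)..δ, W s) + ∫ s in δ..δ⁻¹, W s :=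
    (intervalIntegral.integral_add_adjacent_intervals hWint0δ
      (hWintIcc δ δ⁻¹ hδ0 hδinv0)).symm
  set Hh : ℝ := ∫ s in δ..δ⁻¹, h s with hHhdef
  have hWδdiff : W δ - W δ⁻¹ = 2 * F δ := hWdiff δ δ⁻¹ hδ0 hδinv0
  have hNδ : N δ = δ⁻¹ * (C + δ * W δ) := by rw [hN δ, hW0δ]
  have hNδinv : N δ⁻¹
      = δ * ((C + δ * W δ) + ((δ⁻¹ - δ) * W δ⁻¹ + 2 * (Hh - δ * F δ))) := by
    rw [hN δ⁻¹, inv_inv, hsplit, hW0δ, hWrepr, hibp]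
  have hkey : 2 * F δ - 2 * δ * Hh ≤ δ := by
    have hCterm : 0 ≤ (δ⁻¹ - δ) * C := mul_nonneg (by linarith) hC0
    have hexp : N δ - N δ⁻¹ = 2 * F δ + (δ⁻¹ - δ) * C - 2 * δ * Hh := by
      rw [hNδ, hNδinv]
      have e1 : W δ = W δ⁻¹ + 2 * F δ := by linarith
      rw [e1]
      linear_combination (2 * F δ) * hδδ
    rw [hexp] at hyp
    linarith
  -- pointwise estimates
  set A : ℝ := W ε - W ε⁻¹ with hAdef
  have hA : A = 2 * ∫ u in ε..ε⁻¹, g u := hWdiff ε ε⁻¹ hε0 hεinv0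
  have hA0 : 0 ≤ A := by
    have := hWanti ε ε⁻¹ hε0 (by linarith)
    rw [hAdef]; linarith
  set φ : ℝ → ℝ := fun u => 2 * g u - 2 * δ * h u with hφdef
  have hφcont : ContinuousOn φ (Set.Ioi (0:ℝ)) :=
    (continuousOn_const.mul hgcont).sub (continuousOn_const.mul hcont)
  have hφint : ∀ a b : ℝ, 0 < a → 0 < b → IntervalIntegrable φ volume a b :=
    fun a b ha hb => (hφcont.mono (hsub a b ha hb)).intervalIntegrable
  have hφnn : ∀ u : ℝ, 0 < u → u ≤ δ⁻¹ → 0 ≤ φ u := by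
    intro u hu hud
    have hh := hnn u hu
    have h1 : δ * u ≤ 1 := by
      calc δ * u ≤ δ * δ⁻¹ := mul_le_mul_of_nonneg_left hud hδ0.le
      _ = 1 := hδδ
    have h2 : δ ≤ u⁻¹ := by
      have h' := mul_le_mul_of_nonneg_right h1 (le_of_lt (inv_pos.2 hu))
      rwa [mul_assoc, mul_inv_cancel₀ (ne_of_gt hu), mul_one, one_mul] at h'
    have h3 : δ * h u ≤ u⁻¹ * h u := mul_le_mul_of_nonneg_right h2 hh
    have h4 : g u = u⁻¹ * h u := div_eq_inv_mul _ _
    simp only [hφdef]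
    rw [h4]
    linarith
  have hφval : (∫ u in δ..δ⁻¹, φ u) = 2 * F δ - 2 * δ * Hh := by
    simp only [hφdef, hFdef, hHhdef]
    rw [intervalIntegral.integral_sub ((hgint δ δ⁻¹ hδ0 hδinv0).const_mul 2)
      ((hhint δ δ⁻¹ hδ0 hδinv0).const_mul (2 * δ)),
      intervalIntegral.integral_const_mul, intervalIntegral.integral_const_mul]
  -- split at ε and ε⁻¹
  have hsplitφ : (∫ u in δ..δ⁻¹, φ u)
      = (∫ u in δ..ε, φ u) + (∫ u in ε..ε⁻¹, φ u) + ∫ u in ε⁻¹..δ⁻¹, φ u := by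
    rw [intervalIntegral.integral_add_adjacent_intervals (hφint δ ε hδ0 hε0)
      (hφint ε ε⁻¹ hε0 hεinv0)]
    rw [intervalIntegral.integral_add_adjacent_intervals (hφint δ ε⁻¹ hδ0 hεinv0)
      (hφint ε⁻¹ δ⁻¹ hεinv0 hδinv0)]
  have hpiece1 : 0 ≤ ∫ u in δ..ε, φ u := by
    apply intervalIntegral.integral_nonneg hδε.le
    intro u hu
    exact hφnn u (lt_of_lt_of_le hδ0 hu.1) (by linarith [hu.2])
  have hpiece3 : 0 ≤ ∫ u in ε⁻¹..δ⁻¹, φ u := by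
    apply intervalIntegral.integral_nonneg hεδinv.le
    intro u hu
    exact hφnn u (lt_of_lt_of_le hεinv0 hu.1) hu.2
  have hpiece2 : (1 - δ / ε) * A ≤ ∫ u in ε..ε⁻¹, φ u := by
    have hmono : ∀ u ∈ Set.Icc ε ε⁻¹, (1 - δ / ε) * (2 * g u) ≤ φ u := by
      intro u hu
      have hu0 : 0 < u := lt_of_lt_of_le hε0 hu.1
      have hh := hnn u hu0
      have hεu : ε * u ≤ 1 := by
        calc ε * u ≤ ε * ε⁻¹ := mul_le_mul_of_nonneg_left hu.2 hε0.le
        _ = 1 := hεε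
      have hkey2 : δ * h u ≤ δ / ε * g u := by
        have hg' : g u = h u / u := rfl
        rw [hg', div_mul_div_comm, le_div_iff₀ (mul_pos hε0 hu0)]
        exact mul_le_of_le_one_right (mul_nonneg hδ0.le hh) hεu
      simp only [hφdef]
      have hexp2 : (1 - δ / ε) * (2 * g u) = 2 * g u - 2 * (δ / ε * g u) := by ring
      rw [hexp2]
      linarith [hkey2]
    have hle := intervalIntegral.integral_mono_on (by linarith : ε ≤ ε⁻¹)
      (((hgint ε ε⁻¹ hε0 hεinv0).const_mul 2).const_mul (1 - δ / ε))
      (hφint ε ε⁻¹ hε0 hεinv0) hmono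
    calc (1 - δ / ε) * A = ∫ u in ε..ε⁻¹, (1 - δ / ε) * (2 * g u) := by
          rw [hA, intervalIntegral.integral_const_mul, intervalIntegral.integral_const_mul]
      _ ≤ _ := hle
  -- conclude
  have hfinal : (1 - δ / ε) * A ≤ δ := by
    have hchain : (1 - δ / ε) * A ≤ ∫ u in δ..δ⁻¹, φ u := by
      rw [hsplitφ]; linarith
    rw [hφval] at hchain; linarith
  have hδεhalf : δ / ε ≤ 1 / 2 := by
    rw [div_le_div_iff₀ hε0 (by norm_num : (0:ℝ) < 2)]
    nlinarith [hε4]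
  have hp : 0 ≤ (1 / 2 - δ / ε) * A := mul_nonneg (by linarith) hA0
  have hA2δ : A / 2 ≤ δ := by linarith
  clear_value A
  show A ≤ ε
  linarith only [hA2δ, hδ1, hε4, hAdef]
end
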